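/- arXiv:2409.11520 — 5 statements merged into one kernel-verified Lean document; each statement's English description precedes it below -/
import Mathlib

section
/- Let P₁ and P₂ be convex sets in ℝⁿ. Let A, B ∈ P₁ and C ∈ P₂. Suppose there exist points M on segment [B, C] and N on segment [A, C] with M, N ∈ P₁ ∩ P₂. Then the convex hull of {A, B, C} is contained in P₁ ∪ P₂. -/
lemma combo3' {E : Type*} [AddCommGroup E] [Module ℝ E] {s : Set E} (hs : Convex ℝ s)
    {x y z : E} (hx : x ∈ s) (hy : y ∈ s) (hz : z ∈ s)
    {a b c : ℝ} (ha : 0 ≤ a) (hb : 0 ≤ b) (hc : 0 ≤ c) (habc : a + b + c = 1) :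
    a • x + b • y + c • z ∈ s := by
  have := hs.sum_mem (t := Finset.univ) (w := ![a,b,c]) (z := ![x,y,z]) ?_ ?_ ?_
  · simpa [Fin.sum_univ_three] using this
  · intro i _; fin_cases i <;> simpa
  · simp [Fin.sum_univ_three]; linarith
  · intro i _; fin_cases i <;> simpa

lemma combo4' {E : Type*} [AddCommGroup E] [Module ℝ E] {s : Set E} (hs : Convex ℝ s)
    {x y z w : E} (hx : x ∈ s) (hy : y ∈ s) (hz : z ∈ s) (hw : w ∈ s)
    {a b c d : ℝ} (ha : 0 ≤ a) (hb : 0 ≤ b) (hc : 0 ≤ c) (hd : 0 ≤ d)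
    (habc : a + b + c + d = 1) :
    a • x + b • y + c • z + d • w ∈ s := by
  have := hs.sum_mem (t := Finset.univ) (w := ![a,b,c,d]) (z := ![x,y,z,w]) ?_ ?_ ?_
  · simpa [Fin.sum_univ_four] using this
  · intro i _; fin_cases i <;> simpa
  · simp [Fin.sum_univ_four]; linarith
  · intro i _; fin_cases i <;> simpa

set_option maxHeartbeats 1000000 in
theorem triangle_subset_union_one_vertex_apart {n : ℕ}
    (P₁ P₂ : Set (EuclideanSpace ℝ (Fin n))) (hP₁ : Convex ℝ P₁) (hP₂ : Convex ℝ P₂)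
    (A B C M N : EuclideanSpace ℝ (Fin n))
    (hA : A ∈ P₁) (hB : B ∈ P₁) (hC : C ∈ P₂)
    (hM : M ∈ segment ℝ B C) (hM' : M ∈ P₁ ∩ P₂)
    (hN : N ∈ segment ℝ A C) (hN' : N ∈ P₁ ∩ P₂) :
    convexHull ℝ {A, B, C} ⊆ P₁ ∪ P₂ := by
  obtain ⟨hMP₁, hMP₂⟩ := hM'
  obtain ⟨hNP₁, hNP₂⟩ := hN'
  rw [segment_eq_image] at hM hN
  obtain ⟨s, ⟨hs0, hs1⟩, hMs⟩ := hM
  obtain ⟨t, ⟨ht0, ht1⟩, hNt⟩ := hN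
  simp only at hMs hNt
  -- degenerate cases: M = C or N = C means C ∈ P₁
  rcases eq_or_lt_of_le hs1 with hs1 | hs1
  · subst hs1
    have hCeq : C = M := by rw [← hMs]; module
    refine (convexHull_min ?_ hP₁).trans Set.subset_union_left
    intro x hx
    rcases hx with rfl | rfl | rfl
    · exact hA
    · exact hB
    · exact hCeq ▸ hMP₁
  rcases eq_or_lt_of_le ht1 with ht1 | ht1
  · subst ht1
    have hCeq : C = N := by rw [← hNt]; module
    refine (convexHull_min ?_ hP₁).trans Set.subset_union_left
    intro x hx
    rcases hx with rfl | rfl | rfl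
    · exact hA
    · exact hB
    · exact hCeq ▸ hNP₁
  -- main case
  have h1s : (0:ℝ) < 1 - s := by linarith
  have h1t : (0:ℝ) < 1 - t := by linarith
  intro X hX
  rw [show ({A, B, C} : Set (EuclideanSpace ℝ (Fin n))) = insert A {B, C} from rfl,
    convexHull_insert ⟨B, by simp⟩, mem_convexJoin] at hX
  obtain ⟨A', hA', Y, hY, hXY⟩ := hX
  have hA'' : A' = A := hA'
  rw [hA''] at hXY
  rw [convexHull_pair] at hY
  obtain ⟨u, v, hu, hv, huv, rfl⟩ := hY
  obtain ⟨p, q, hp, hq, hpq, rfl⟩ := hXY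
  set a := p with ha_def
  set b := q * u with hb_def
  set c := q * v with hc_def
  have ha : 0 ≤ a := hp
  have hb : 0 ≤ b := mul_nonneg hq hu
  have hc : 0 ≤ c := mul_nonneg hq hv
  have habc : a + b + c = 1 := by
    simp only [ha_def, hb_def, hc_def]; nlinarith
  have hXeq : p • A + q • (u • B + v • C) = a • A + b • B + c • C := by
    simp only [ha_def, hb_def, hc_def]; module
  rw [hXeq]
  set α := b / (1 - s) with hα_def
  set β := a / (1 - t) with hβ_def
  have hα0 : 0 ≤ α := div_nonneg hb h1s.le
  have hβ0 : 0 ≤ β := div_nonneg ha h1t.le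
  have hαb : α * (1 - s) = b := div_mul_cancel₀ b h1s.ne'
  have hβa : β * (1 - t) = a := div_mul_cancel₀ a h1t.ne'
  by_cases hcase : α + β ≤ 1
  · -- X ∈ P₂ : X = β • N + α • M + (1 - α - β) • C
    right
    have hc' : c = 1 - β * (1 - t) - α * (1 - s) := by rw [hβa, hαb]; linarith
    have : a • A + b • B + c • C = β • N + α • M + (1 - α - β) • C := by
      rw [← hMs, ← hNt, ← hβa, ← hαb, hc']; module
    rw [this]
    exact combo3' hP₂ hNP₂ hMP₂ hC hβ0 hα0 (by linarith) (by ring)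
  · -- X ∈ P₁
    left
    push_neg at hcase
    have hd0 : 0 < α * s + β * t := by nlinarith [hαb, hβa]
    set lam := c / (α * s + β * t) with hlam_def
    have hlam0 : 0 ≤ lam := div_nonneg hc hd0.le
    have hlamc : lam * (α * s + β * t) = c := div_mul_cancel₀ c hd0.ne'
    have hlam1 : lam ≤ 1 := by
      rw [hlam_def, div_le_one hd0]; nlinarith [hαb, hβa]
    have : a • A + b • B + c • C =
        (a * (1 - lam)) • A + (b * (1 - lam)) • B + (lam * α) • M + (lam * β) • N := by
      rw [← hMs, ← hNt, ← hβa, ← hαb, ← hlamc]; module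
    rw [this]
    refine combo4' hP₁ hA hB hMP₁ hNP₁
      (mul_nonneg ha (by linarith)) (mul_nonneg hb (by linarith))
      (mul_nonneg hlam0 hα0) (mul_nonneg hlam0 hβ0) ?_
    nlinarith [hlamc, hαb, hβa]
end

section
/- Let P₁, P₂ be convex sets in ℝⁿ and A, B, C ∈ ℝⁿ. Suppose each of the three segments [A,B], [B,C], [A,C] is contained in P₁ ∪ P₂, each vertex lies in P₁ ∪ P₂, and moreover at most one vertex lies outside P₁ (say C ∈ P₂ \ P₁ while A, B ∈ P₁), and each segment incident to C contains a point of P₁ ∩ P₂. Then the convex hull of {A, B, C} is contained in P₁ ∪ P₂. -/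
theorem triangle_subset_union_essential_case {n : ℕ}
    (P₁ P₂ : Set (EuclideanSpace ℝ (Fin n))) (hP₁ : Convex ℝ P₁) (hP₂ : Convex ℝ P₂)
    (A B C : EuclideanSpace ℝ (Fin n))
    (hAB : segment ℝ A B ⊆ P₁ ∪ P₂)
    (hBC : segment ℝ B C ⊆ P₁ ∪ P₂)
    (hAC : segment ℝ A C ⊆ P₁ ∪ P₂)
    (hAu : A ∈ P₁ ∪ P₂) (hBu : B ∈ P₁ ∪ P₂) (hCu : C ∈ P₁ ∪ P₂)
    (hA : A ∈ P₁) (hB : B ∈ P₁) (hC : C ∈ P₂ \ P₁)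
    (hACmeet : ∃ x ∈ segment ℝ A C, x ∈ P₁ ∩ P₂)
    (hBCmeet : ∃ x ∈ segment ℝ B C, x ∈ P₁ ∩ P₂) :
    convexHull ℝ {A, B, C} ⊆ P₁ ∪ P₂ := by
  obtain ⟨X, hXseg, hX1, hX2⟩ := hACmeet
  obtain ⟨Y, hYseg, hY1, hY2⟩ := hBCmeet
  obtain ⟨a, s, ha, hs, has, hXdef⟩ := hXseg
  obtain ⟨b, t, hb, ht, hbt, hYdef⟩ := hYseg
  have ha' : a = 1 - s := by linarith
  have hb' : b = 1 - t := by linarith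
  have hs1 : s < 1 := by
    rcases lt_or_eq_of_le (show s ≤ 1 by linarith) with h | h
    · exact h
    · exfalso
      apply hC.2
      have haz : a = 0 := by linarith
      rw [haz, h] at hXdef
      simp only [zero_smul, one_smul, zero_add] at hXdef
      exact hXdef ▸ hX1
  have ht1 : t < 1 := by
    rcases lt_or_eq_of_le (show t ≤ 1 by linarith) with h | h
    · exact h
    · exfalso
      apply hC.2
      have hbz : b = 0 := by linarith
      rw [hbz, h] at hYdef
      simp only [zero_smul, one_smul, zero_add] at hYdef
      exact hYdef ▸ hY1
  intro p hp
  rw [show ({A, B, C} : Set (EuclideanSpace ℝ (Fin n))) = insert A {B, C} from rfl,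
    convexHull_insert ⟨B, by simp⟩, convexHull_pair] at hp
  rw [mem_convexJoin] at hp
  obtain ⟨A', hA', z, hz, hpz⟩ := hp
  rw [Set.mem_singleton_iff] at hA'
  subst A'
  obtain ⟨e, f, he, hf, hef, hzdef⟩ := hz
  obtain ⟨c, d, hc, hd, hcd, hpdef⟩ := hpz
  set α := c with hα
  set β := d * e with hβ
  set γ := d * f with hγ
  have hα0 : 0 ≤ α := hc
  have hβ0 : 0 ≤ β := mul_nonneg hd he
  have hγ0 : 0 ≤ γ := mul_nonneg hd hf
  have hsum1 : α + β + γ = 1 := by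
    have : d * (e + f) = d := by rw [hef, mul_one]
    simp only [hα, hβ, hγ]
    nlinarith
  have hp' : p = α • A + β • B + γ • C := by
    rw [← hpdef, ← hzdef]
    module
  have hs0 : (0:ℝ) < 1 - s := by linarith
  have ht0 : (0:ℝ) < 1 - t := by linarith
  set μ := α / (1 - s) with hμdef
  set ν := β / (1 - t) with hνdef
  have hμ : μ * (1 - s) = α := div_mul_cancel₀ α hs0.ne'
  have hν : ν * (1 - t) = β := div_mul_cancel₀ β ht0.ne'
  have hμ0 : 0 ≤ μ := div_nonneg hα0 hs0.le
  have hν0 : 0 ≤ ν := div_nonneg hβ0 ht0.le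
  by_cases hcase : μ + ν ≤ 1
  · -- p ∈ P₂ as convex combination of C, X, Y
    right
    have key : (1 - μ - ν) • C + μ • X + ν • Y = p := by
      rw [← hXdef, ← hYdef, hp']
      match_scalars
      · linear_combination -hμ - hν - hsum1
      · linear_combination hμ + μ * ha'
      · linear_combination hν + ν * hb'
    rw [← key]
    have h1 : (1 - μ - ν) • C + μ • X + ν • Y ∈ P₂ := by
      have := hP₂.sum_mem (t := (Finset.univ : Finset (Fin 3)))
        (w := ![1 - μ - ν, μ, ν]) (z := ![C, X, Y])
        (by intro i _; fin_cases i <;> simp <;> linarith)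
        (by simp [Fin.sum_univ_three]; ring)
        (by intro i _; fin_cases i <;> simp [hC.1, hX2, hY2])
      simpa [Fin.sum_univ_three] using this
    exact h1
  · push_neg at hcase
    left
    by_cases hγz : γ = 0
    · have : p = α • A + β • B := by rw [hp', hγz]; module
      rw [this]
      exact hP₁ hA hB hα0 hβ0 (by linarith)
    · have hγpos : 0 < γ := lt_of_le_of_ne hγ0 (Ne.symm hγz)
      set D := μ * s + ν * t with hDdef
      have hγeq : γ = 1 - μ - ν + D := by
        linear_combination hμ + hν + hsum1
      have hD : γ ≤ D := by linarith
      have hD0 : 0 < D := lt_of_lt_of_le hγpos hD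
      set κ := γ / D with hκdef
      have hκ : κ * D = γ := div_mul_cancel₀ γ hD0.ne'
      have hκ0 : 0 ≤ κ := div_nonneg hγ0 hD0.le
      have hκ1 : κ ≤ 1 := by rw [hκdef, div_le_one hD0]; exact hD
      have key : ((1 - κ) * α) • A + ((1 - κ) * β) • B + (κ * μ) • X + (κ * ν) • Y = p := by
        rw [← hXdef, ← hYdef, hp']
        match_scalars
        · linear_combination κ * hμ + (κ * μ) * ha'
        · linear_combination κ * hν + (κ * ν) * hb'
        · linear_combination hκ
      rw [← key]
      have h1 := hP₁.sum_mem (t := (Finset.univ : Finset (Fin 4)))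
        (w := ![(1 - κ) * α, (1 - κ) * β, κ * μ, κ * ν]) (z := ![A, B, X, Y])
        (by intro i _
            fin_cases i <;> simp
            · exact mul_nonneg (by linarith) hα0
            · exact mul_nonneg (by linarith) hβ0
            · exact mul_nonneg hκ0 hμ0
            · exact mul_nonneg hκ0 hν0)
        (by simp [Fin.sum_univ_four]; linear_combination κ * hμ + κ * hν + hκ + hsum1)
        (by intro i _; fin_cases i <;> simp [hA, hB, hX1, hY1])
      simpa [Fin.sum_univ_four] using h1
end

section
/- Let O ⊆ ℝⁿ be a convex set and p₀, p₁ ∈ ℝⁿ. The reachable set of O under the translation from p₀ to p₁, i.e., ⋃_{t∈[0,1]} (O + p₀ + t(p₁ - p₀)), equals the convex hull of (O + p₀) ∪ (O + p₁). In particular, it is convex. -/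
theorem reachable_set_eq_convexHull {n : ℕ}
    (O : Set (EuclideanSpace ℝ (Fin n))) (hO : Convex ℝ O)
    (p₀ p₁ : EuclideanSpace ℝ (Fin n)) :
    (⋃ t ∈ Set.Icc (0 : ℝ) 1, (fun x => x + (p₀ + t • (p₁ - p₀))) '' O) =
      convexHull ℝ (((fun x => x + p₀) '' O) ∪ ((fun x => x + p₁) '' O)) ∧
    Convex ℝ (⋃ t ∈ Set.Icc (0 : ℝ) 1, (fun x => x + (p₀ + t • (p₁ - p₀))) '' O) := by
  rcases O.eq_empty_or_nonempty with rfl | hne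
  · simp [convex_empty]
  have hmain : (⋃ t ∈ Set.Icc (0 : ℝ) 1, (fun x => x + (p₀ + t • (p₁ - p₀))) '' O) =
      convexHull ℝ (((fun x => x + p₀) '' O) ∪ ((fun x => x + p₁) '' O)) := by
    have hA : Convex ℝ ((fun x => x + p₀) '' O) := by simpa [add_comm] using hO.translate p₀
    have hB : Convex ℝ ((fun x => x + p₁) '' O) := by simpa [add_comm] using hO.translate p₁
    rw [hA.convexHull_union hB (hne.image _) (hne.image _)]
    ext z
    simp only [Set.mem_iUnion, mem_convexJoin, Set.mem_image, Set.mem_Icc]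
    constructor
    · rintro ⟨t, ⟨ht0, ht1⟩, x, hx, rfl⟩
      refine ⟨x + p₀, ⟨x, hx, rfl⟩, x + p₁, ⟨x, hx, rfl⟩, 1 - t, t, by linarith, ht0, by ring, ?_⟩
      module
    · rintro ⟨_, ⟨a, ha, rfl⟩, _, ⟨b, hb, rfl⟩, s, t, hs, ht, hst, rfl⟩
      refine ⟨t, ⟨ht, by linarith⟩, s • a + t • b, hO ha hb hs ht hst, ?_⟩
      have hs1 : s = 1 - t := by linarith
      subst hs1
      module
  exact ⟨hmain, hmain ▸ convex_convexHull ℝ _⟩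
end

section
/- Let x ∈ ℝ² be a point at distance r from the origin, and consider the arc traced by rotating x about the origin by an angle θ ∈ [0, Δ] with 0 < Δ ≤ π/3. Let A = x, B = R_Δ x be the arc endpoints, M their midpoint, and A* the point on the ray from the origin through M at distance r / cos(Δ/2). Then every point of the arc lies inside the triangle with vertices A, B, A* (i.e., the two segments [A, A*] and [A*, B] together with the chord [A, B] enclose the arc). -/
set_option maxHeartbeats 1000000 in
lemma combo3 {C : Set ℂ} (hC : Convex ℝ C) {p q r : ℂ} (hp : p ∈ C) (hq : q ∈ C) (hr : r ∈ C)
    {a b c : ℝ} (ha : 0 ≤ a) (hb : 0 ≤ b) (hc : 0 ≤ c) (habc : a + b + c = 1) :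
    a • p + b • q + c • r ∈ C := by
  have h := hC.sum_mem (t := (Finset.univ : Finset (Fin 3))) (w := ![a,b,c]) (z := ![p,q,r])
    (by intro i _; fin_cases i <;> assumption)
    (by simp [Fin.sum_univ_three]; linarith)
    (by intro i _; fin_cases i <;> assumption)
  simpa [Fin.sum_univ_three] using h

set_option maxHeartbeats 1000000 in
open Complex in
/-- Arc overapproximation: identifying ℝ² with ℂ, rotation by θ is multiplication
by `exp (θ * I)`. The midpoint `M = (A + B)/2` of the chord has norm `r * cos (Δ/2)`,
so `A* = (1 / cos (Δ/2)^2) • M` is the point on the ray from the origin through `M`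
at distance `r / cos (Δ/2)`. Every arc point lies in the triangle `A B A*`. -/
theorem arc_subset_triangle (x : ℂ) (r : ℝ) (hx : ‖x‖ = r)
    (Δ : ℝ) (hΔ0 : 0 < Δ) (hΔ : Δ ≤ Real.pi / 3) :
    ∀ θ ∈ Set.Icc (0 : ℝ) Δ,
      Complex.exp (θ * Complex.I) * x ∈
        convexHull ℝ ({x, Complex.exp (Δ * Complex.I) * x,
          (1 / (Real.cos (Δ / 2))^2) • ((x + Complex.exp (Δ * Complex.I) * x) / 2)} :
            Set ℂ) := by
  rintro θ ⟨hθ0, hθΔ⟩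
  have hpi : (0:ℝ) < Real.pi := Real.pi_pos
  set D := Δ / 2 with hD
  have hD0 : 0 < D := by positivity
  have hDpi : D ≤ Real.pi / 6 := by rw [hD]; linarith
  set c := Real.cos D with hcdef
  set s := Real.sin D with hsdef
  have hs : 0 < s := Real.sin_pos_of_pos_of_lt_pi hD0 (by linarith)
  have hc : 0 < c := Real.cos_pos_of_mem_Ioo ⟨by linarith, by linarith⟩
  have hsc : s^2 + c^2 = 1 := Real.sin_sq_add_cos_sq D
  have hs0 : s ≠ 0 := ne_of_gt hs
  have hc0 : c ≠ 0 := ne_of_gt hc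
  set φ := θ - D with hφ
  set A : ℝ := ((1 - c * Real.cos φ) / s^2 - Real.sin φ / s) / 2 with hA
  set B : ℝ := ((1 - c * Real.cos φ) / s^2 + Real.sin φ / s) / 2 with hB
  set T : ℝ := 1 - (1 - c * Real.cos φ) / s^2 with hT
  have hcos_sub : Real.cos (D - φ) = c * Real.cos φ + s * Real.sin φ := Real.cos_sub D φ
  have hcos_add : Real.cos (D + φ) = c * Real.cos φ - s * Real.sin φ := Real.cos_add D φ
  have hAnn : 0 ≤ A := by
    have h1 : c * Real.cos φ + s * Real.sin φ ≤ 1 := hcos_sub ▸ Real.cos_le_one _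
    have h2 : A = (1 - (c * Real.cos φ + s * Real.sin φ)) / (2 * s^2) := by
      rw [hA]; field_simp; ring
    rw [h2]
    apply div_nonneg (by linarith) (by positivity)
  have hBnn : 0 ≤ B := by
    have h1 : c * Real.cos φ - s * Real.sin φ ≤ 1 := hcos_add ▸ Real.cos_le_one _
    have h2 : B = (1 - (c * Real.cos φ - s * Real.sin φ)) / (2 * s^2) := by
      rw [hB]; field_simp; ring
    rw [h2]
    apply div_nonneg (by linarith) (by positivity)
  have hTnn : 0 ≤ T := by
    have habs : |φ| ≤ D := abs_le.2 ⟨by simp [hφ]; linarith, by simp [hφ, hD]; linarith⟩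
    have h1 : c ≤ Real.cos φ := by
      rw [← Real.cos_abs φ]
      exact Real.cos_le_cos_of_nonneg_of_le_pi (abs_nonneg _) (by linarith) habs
    have h2 : T = c * (Real.cos φ - c) / s^2 := by
      rw [hT]; linear_combination (norm := (field_simp; ring1)) (1/s^2) * hsc
    rw [h2]
    apply div_nonneg (by nlinarith) (by positivity)
  have hsum : A + B + T = 1 := by rw [hA, hB, hT]; ring
  -- trig facts
  have hcosΔ : Real.cos Δ = 2 * c^2 - 1 := by
    have : Δ = 2 * D := by rw [hD]; ring
    rw [this, Real.cos_two_mul]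
  have hsinΔ : Real.sin Δ = 2 * s * c := by
    have : Δ = 2 * D := by rw [hD]; ring
    rw [this, Real.sin_two_mul]
  have hcosθ : Real.cos θ = c * Real.cos φ - s * Real.sin φ := by
    have : θ = D + φ := by rw [hφ]; ring
    rw [this, Real.cos_add]
  have hsinθ : Real.sin θ = s * Real.cos φ + c * Real.sin φ := by
    have : θ = D + φ := by rw [hφ]; ring
    rw [this, Real.sin_add]
  have h1c : 1 - c^2 ≠ 0 := by nlinarith
  have hs2 : s^2 = 1 - c^2 := by linarith
  have hre : A + B * Real.cos Δ + T * (1 / c^2) * ((1 + Real.cos Δ) / 2) = Real.cos θ := by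
    rw [hcosΔ, hcosθ, hA, hB, hT]
    linear_combination (norm := (field_simp; ring1)) ((1 - c * Real.cos φ + s * Real.sin φ) / s^2) * hsc
  have him : B * Real.sin Δ + T * (1 / c^2) * (Real.sin Δ / 2) = Real.sin θ := by
    rw [hsinΔ, hsinθ, hB, hT]
    linear_combination (norm := (field_simp; ring1)) ((1 - c * Real.cos φ) / (c * s)) * hsc
  have hmain : Complex.exp (θ * Complex.I) * x
      = A • x + B • (Complex.exp (Δ * Complex.I) * x)
        + T • ((1 / (Real.cos (Δ / 2))^2) • ((x + Complex.exp (Δ * Complex.I) * x) / 2)) := by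
    rw [Complex.exp_mul_I, Complex.exp_mul_I]
    have h1 : (Complex.cos θ) = (Real.cos θ : ℂ) := (Complex.ofReal_cos θ).symm
    have h2 : (Complex.sin θ) = (Real.sin θ : ℂ) := (Complex.ofReal_sin θ).symm
    have h3 : (Complex.cos Δ) = (Real.cos Δ : ℂ) := (Complex.ofReal_cos Δ).symm
    have h4 : (Complex.sin Δ) = (Real.sin Δ : ℂ) := (Complex.ofReal_sin Δ).symm
    rw [h1, h2, h3, h4]
    simp only [Complex.real_smul, ← hcdef]
    have hre' : (A : ℂ) + B * (Real.cos Δ : ℂ) + T * (1 / (c:ℂ)^2) * ((1 + (Real.cos Δ:ℂ)) / 2)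
        = (Real.cos θ : ℂ) := by exact_mod_cast congrArg (Complex.ofReal) hre
    have him' : (B:ℂ) * (Real.sin Δ:ℂ) + (T:ℂ) * (1 / (c:ℂ)^2) * ((Real.sin Δ:ℂ) / 2)
        = (Real.sin θ : ℂ) := by exact_mod_cast congrArg (Complex.ofReal) him
    have hcne : (c:ℂ) ≠ 0 := by exact_mod_cast hc.ne'
    have hcc : Complex.cos ((Δ:ℂ) / 2) = (c:ℂ) := by rw [hcdef, hD]; push_cast; rfl
    push_cast at hre' him' ⊢
    rw [hcc]
    linear_combination (-x) * hre' - x * Complex.I * him'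
  rw [hmain]
  refine combo3 (convex_convexHull ℝ _) ?_ ?_ ?_ hAnn hBnn hTnn hsum
  · exact subset_convexHull ℝ _ (Set.mem_insert _ _)
  · exact subset_convexHull ℝ _ (Set.mem_insert_of_mem _ (Set.mem_insert _ _))
  · exact subset_convexHull ℝ _ (Set.mem_insert_of_mem _ (Set.mem_insert_of_mem _ rfl))
end

section
/- Let O be a continuous rigid motion in ℝ² consisting of a pure rotation of a convex polygon Q = convexHull{v₁,…,v_k} (containing the origin) about the origin by angle Δ ∈ (0, π/3]. Then the reachable set ⋃_{θ∈[0,Δ]} R_θ(Q) is contained in the convex hull of Q ∪ R_Δ(Q) ∪ {v_i* : i = 1..k}, where v_i* is the point on the ray through the midpoint of [v_i, R_Δ v_i] at distance ‖v_i‖/cos(Δ/2) from the origin. -/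
/-!
Rotations are ℝ-linear, so `exp (θ I) • conv {vᵢ} = conv {exp (θ I) vᵢ}` and it suffices to place
each rotated vertex in the hull. Turning everything back by half the angle `s = Δ / 2`, the arc
`{exp (φ I) : |φ| ≤ s}` lies in the triangle with vertices `exp (±s I)` and `1 / cos s`, the
intersection of the tangents at those endpoints; multiplying by `exp (s I) vᵢ` sends this triangle
to the one with vertices `vᵢ`, `exp (Δ I) vᵢ` and `vᵢ*`.
-/

open Complex

theorem mem_convexHull_triple_of_eq_add_add {𝕜 E : Type*} [Field 𝕜] [LinearOrder 𝕜]
    [IsStrictOrderedRing 𝕜] [AddCommGroup E] [Module 𝕜 E] {x y z p : E} {a b c : 𝕜}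
    (ha : 0 ≤ a) (hb : 0 ≤ b) (hc : 0 ≤ c) (habc : a + b + c = 1)
    (hp : a • x + b • y + c • z = p) : p ∈ convexHull 𝕜 {x, y, z} := by
  have := (convex_convexHull 𝕜 {x, y, z}).sum_mem (t := Finset.univ) (w := ![a, b, c])
    (z := ![x, y, z]) (fun i _ => by fin_cases i <;> assumption)
    (by simpa [Fin.sum_univ_three] using habc)
    (fun i _ => subset_convexHull 𝕜 _ (by fin_cases i <;> simp))
  simpa [Fin.sum_univ_three, hp] using this

/-- Nonnegativity of the weights of `exp (∓s I)` is `cos (φ ∓ s) ≤ 1`, that of the apex weight is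
`cos s ≤ cos φ`. -/
theorem exp_mul_I_mem_convexHull_tangent_triangle {s φ : ℝ} (hφ : |φ| ≤ s)
    (hs : s < Real.pi / 2) :
    exp (φ * I) ∈ convexHull ℝ {exp (-s * I), exp (s * I), (Real.cos s : ℂ)⁻¹} := by
  rcases (abs_nonneg φ).trans hφ |>.eq_or_lt with rfl | hs0
  · obtain rfl : φ = 0 := abs_nonpos_iff.mp hφ
    exact subset_convexHull ℝ _ (by simp)
  have hsin : 0 < Real.sin s := Real.sin_pos_of_pos_of_lt_pi hs0 (by linarith [Real.pi_pos])
  have hcos : 0 < Real.cos s := Real.cos_pos_of_mem_Ioo ⟨by linarith, hs⟩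
  have hcosφ : Real.cos s ≤ Real.cos φ := by
    rw [← Real.cos_abs φ]
    exact Real.cos_le_cos_of_nonneg_of_le_pi (abs_nonneg _) (by linarith) hφ
  refine mem_convexHull_triple_of_eq_add_add
    (a := (1 - Real.cos (φ - s)) / (2 * Real.sin s ^ 2))
    (b := (1 - Real.cos (φ + s)) / (2 * Real.sin s ^ 2))
    (c := Real.cos s * (Real.cos φ - Real.cos s) / Real.sin s ^ 2)
    (by have := Real.cos_le_one (φ - s); positivity)
    (by have := Real.cos_le_one (φ + s); positivity)
    (by have := sub_nonneg.mpr hcosφ; positivity) ?_ ?_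
  · rw [Real.cos_sub, Real.cos_add]
    field_simp
    linear_combination (-2) * Real.sin_sq_add_cos_sq s
  · have hcos' : Complex.cos s ≠ 0 := by exact_mod_cast hcos.ne'
    have hsin' : Complex.sin s ≠ 0 := by exact_mod_cast hsin.ne'
    simp only [Complex.real_smul]
    push_cast
    rw [Complex.exp_mul_I, Complex.exp_mul_I, Complex.exp_mul_I, Complex.cos_neg, Complex.sin_neg,
      Complex.cos_sub, Complex.cos_add]
    field_simp
    linear_combination (-2) * Complex.cos φ * Complex.sin_sq_add_cos_sq s

theorem one_add_exp_two_mul_I_div_two (z : ℂ) :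
    (1 + exp (2 * z * I)) / 2 = exp (z * I) * cos z := by
  rw [Complex.cos, mul_div_assoc', mul_add, ← Complex.exp_add, ← Complex.exp_add, neg_mul,
    add_neg_cancel, Complex.exp_zero]
  ring_nf

theorem exp_mul_I_mul_mem_convexHull {Δ θ : ℝ} (hθ : θ ∈ Set.Icc 0 Δ) (hΔ : Δ < Real.pi)
    (w : ℂ) :
    exp (θ * I) * w ∈ convexHull ℝ {w, exp (Δ * I) * w,
      (1 / Real.cos (Δ / 2) ^ 2) • ((w + exp (Δ * I) * w) / 2)} := by
  set s := Δ / 2 with hs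
  obtain ⟨hθ0, hθΔ⟩ := hθ
  have hcos : Real.cos s ≠ 0 := (Real.cos_pos_of_mem_Ioo ⟨by linarith, by linarith⟩).ne'
  have hmem := exp_mul_I_mem_convexHull_tangent_triangle (φ := θ - s) (s := s)
    (abs_le.mpr ⟨by linarith, by linarith⟩) (by linarith)
  have := Set.mem_image_of_mem (LinearMap.mulLeft ℝ (exp (s * I) * w)) hmem
  rw [LinearMap.image_convexHull, Set.image_insert_eq, Set.image_insert_eq, Set.image_singleton]
    at this
  have hΔ : Δ = 2 * s := by rw [hs]; ring
  have hstart : exp (s * I) * w * exp (-s * I) = w := by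
    rw [mul_right_comm, ← Complex.exp_add, neg_mul, add_neg_cancel, Complex.exp_zero, one_mul]
  have hend : exp (s * I) * w * exp (s * I) = exp (Δ * I) * w := by
    rw [mul_right_comm, ← Complex.exp_add, hΔ]; push_cast; ring_nf
  have happex : exp (s * I) * w * (Real.cos s : ℂ)⁻¹ =
      (1 / Real.cos s ^ 2) • ((w + exp (Δ * I) * w) / 2) := by
    rw [Complex.real_smul, ← one_add_mul, mul_div_right_comm, hΔ]
    push_cast
    rw [one_add_exp_two_mul_I_div_two]
    field_simp
  have hpoint : exp (s * I) * w * exp ((θ - s : ℝ) * I) = exp (θ * I) * w := by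
    rw [mul_right_comm, ← Complex.exp_add]; push_cast; ring_nf
  simpa only [LinearMap.mulLeft_apply, hstart, hend, happex, hpoint] using this

theorem rotation_sweep_subset_convexHull_general {k : ℕ}
    (v : Fin k → ℂ) (Q : Set ℂ) (hQ : Q = convexHull ℝ (Set.range v))
    (Δ : ℝ) (hΔ : Δ ≤ Real.pi / 3) :
    (⋃ θ ∈ Set.Icc (0 : ℝ) Δ, (fun z => Complex.exp (θ * Complex.I) * z) '' Q) ⊆
      convexHull ℝ (Q ∪ ((fun z => Complex.exp (Δ * Complex.I) * z) '' Q) ∪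
        Set.range (fun i =>
          (1 / (Real.cos (Δ / 2))^2) •
            ((v i + Complex.exp (Δ * Complex.I) * v i) / 2))) := by
  have hvQ (i : Fin k) : v i ∈ Q := hQ ▸ subset_convexHull ℝ _ ⟨i, rfl⟩
  simp only [Set.iUnion_subset_iff]
  intro θ hθ
  have hrot : (fun z => exp (θ * I) * z) '' Q =
      convexHull ℝ (Set.range fun i => exp (θ * I) * v i) := by
    rw [hQ, Set.range_comp' (exp (θ * I) * ·) v]
    exact (LinearMap.mulLeft ℝ (exp (θ * I))).image_convexHull _
  rw [hrot]
  refine convexHull_min (Set.range_subset_iff.mpr fun i => ?_) (convex_convexHull ℝ _)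
  refine convexHull_mono ?_
    (exp_mul_I_mul_mem_convexHull hθ (by linarith [Real.pi_pos]) (v i))
  rintro _ (rfl | rfl | rfl)
  · exact .inl (.inl (hvQ i))
  · exact .inl (.inr ⟨v i, hvQ i, rfl⟩)
  · exact .inr ⟨i, rfl⟩

/-- Rotating a convex polygon `Q = convexHull {v₁,…,v_k}` (containing the origin of
ℝ² ≃ ℂ) about the origin by an angle `Δ ∈ (0, π/3]`: the reachable set
`⋃_{θ∈[0,Δ]} R_θ(Q)` is contained in the convex hull of `Q ∪ R_Δ(Q) ∪ {vᵢ*}`,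
where `vᵢ*` lies on the ray from the origin through the midpoint of
`[vᵢ, R_Δ vᵢ]` at distance `‖vᵢ‖ / cos (Δ/2)` from the origin. -/
theorem rotation_sweep_subset_convexHull {k : ℕ}
    (v : Fin k → ℂ) (Q : Set ℂ) (hQ : Q = convexHull ℝ (Set.range v))
    (h0 : (0 : ℂ) ∈ Q)
    (Δ : ℝ) (hΔ0 : 0 < Δ) (hΔ : Δ ≤ Real.pi / 3) :
    (⋃ θ ∈ Set.Icc (0 : ℝ) Δ, (fun z => Complex.exp (θ * Complex.I) * z) '' Q) ⊆
      convexHull ℝ (Q ∪ ((fun z => Complex.exp (Δ * Complex.I) * z) '' Q) ∪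
        Set.range (fun i =>
          (1 / (Real.cos (Δ / 2))^2) •
            ((v i + Complex.exp (Δ * Complex.I) * v i) / 2))) :=
  rotation_sweep_subset_convexHull_general v Q hQ Δ hΔ
end
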